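/- Let m ≥ 2 be an integer, c ∈ ℝ, α > 0, and let p(n) ∈ [0,1] be a sequence such that p(n) ≥ (1+α)·(log n + c)/n for all sufficiently large n. Then there exists a constant C > 0 such that the probability that B_m(n, p(n)) admits a 2-directing word of length at most C·n·log n tends to 1 as n → ∞. In particular, for any fixed m ≥ 2, a set of m independent uniformly random n×n binary matrices (i.e., p(n) = 1/2 for all n) admits a 2-directing word of length O(n·log n) with probability tending to 1 as n → ∞. -/

import Mathlib

open Matrix Filter

/-- The 0/1 matrix (over `ℕ`) associated to a Boolean matrix of entries. -/
def toMat {n : ℕ} (b : Fin n → Fin n → Bool) : Matrix (Fin n) (Fin n) ℕ :=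
  Matrix.of fun i j => if b i j then 1 else 0

open Classical in
/-- The probability that the random set `B_m(n, p)` of `m` independent random `n × n`
binary matrices, whose `m · n²` entries are i.i.d. Bernoulli(`p`), satisfies `E`. -/
noncomputable def bernoulliProb (n m : ℕ) (p : ℝ)
    (E : (Fin m → Matrix (Fin n) (Fin n) ℕ) → Prop) : ℝ :=
  ∑ b : Fin m → Fin n → Fin n → Bool,
    if E (fun k => toMat (b k)) then
      ∏ k : Fin m, ∏ i : Fin n, ∏ j : Fin n, (if b k i j then p else 1 - p)
    else 0

/-- The set `M` admits a 2-directing word of length at most `L`: there is a nonempty word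
`w` of length at most `L` whose product has every column either entrywise positive or
entrywise zero. -/
def TwoDirWithin {n m : ℕ} (M : Fin m → Matrix (Fin n) (Fin n) ℕ) (L : ℝ) : Prop :=
  ∃ w : List (Fin m), w ≠ [] ∧ (w.length : ℝ) ≤ L ∧
    ∀ j, (∀ i, 0 < (w.map M).prod i j) ∨ (∀ i, (w.map M).prod i j = 0)

/-!
Only the first matrix `A` of the sample is used. Suppose its digraph of positive entries has a loop
at some `v` and an edge leaving every nonempty proper vertex set. Because of the loop, the set of
vertices reached from `v` by walks of length `k` can only grow with `k`, and the cut condition makes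
it grow strictly until it is everything; so row `v` of `A ^ n` is positive, and so is column `v`
(the same argument for `Aᵀ`). Hence `A ^ (2n)` is positive, and the word made of `2n ≤ n log n`
copies of `A` is 2-directing.

If `A` has i.i.d. Bernoulli(`q`) entries, its diagonal is empty with probability `(1-q)^n` and the
block `S × Sᶜ` with `|S| = s` with probability `(1-q)^{s(n-s)}`. When `qn ≥ (1+β) log n`, the union
bound `∑_{0<s<n} C(n,s) (1-q)^{s(n-s)}` is `O(n^{-β/2})`. The hypothesis on `p` gives this with
`β = α/2`, and `p = 1/2` is far above the threshold.
-/

open Finset Real Topology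

lemma mul_apply_pos {ι κ μ : Type*} [Fintype κ] {A : Matrix ι κ ℕ} {B : Matrix κ μ ℕ}
    {i : ι} {l : κ} {j : μ} (hA : 0 < A i l) (hB : 0 < B l j) : 0 < (A * B) i j := by
  rw [mul_apply]
  exact (Nat.mul_pos hA hB).trans_le
    (single_le_sum (f := fun x => A i x * B x j) (fun _ _ => Nat.zero_le _) (mem_univ l))

section CutConnectivity

variable {ι : Type*} [Fintype ι]

/-- Strong connectivity of the digraph of positive entries, phrased through cuts. -/
def CrossesEveryCut (A : Matrix ι ι ℕ) : Prop :=
  ∀ S : Finset ι, S.Nonempty → S ≠ univ → ∃ i ∈ S, ∃ j ∉ S, 0 < A i j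

variable {A : Matrix ι ι ℕ}

lemma CrossesEveryCut.transpose (hA : CrossesEveryCut A) : CrossesEveryCut Aᵀ := by
  classical
  intro S hS hSu
  obtain ⟨i, hi, j, hj, hij⟩ :=
    hA Sᶜ (by rwa [← compl_ne_univ_iff_nonempty, compl_compl])
      ((compl_ne_univ_iff_nonempty S).mpr hS)
  exact ⟨j, by simpa using hj, i, mem_compl.mp hi, hij⟩

variable [DecidableEq ι]

lemma min_le_card_pos_pow_apply (hA : CrossesEveryCut A) {v : ι} (hv : 0 < A v v) (k : ℕ) :
    min (k + 1) (Fintype.card ι) ≤ #{j | 0 < (A ^ k) v j} := by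
  induction k with
  | zero =>
    have : 0 < #({j | 0 < (A ^ 0) v j} : Finset ι) := card_pos.mpr ⟨v, by simp⟩
    omega
  | succ k ih =>
    set R : Finset ι := {j | 0 < (A ^ k) v j}
    set R' : Finset ι := {j | 0 < (A ^ (k + 1)) v j}
    have hsub : R ⊆ R' := fun j hj => by
      rw [mem_filter, pow_succ'] at *
      exact ⟨mem_univ j, mul_apply_pos hv hj.2⟩
    by_cases hR : R = univ
    · rw [hR, univ_subset_iff] at hsub
      rw [hsub, card_univ]
      omega
    · have hRpos : 0 < #R := by have := Fintype.card_pos_iff.mpr ⟨v⟩; omega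
      obtain ⟨i, hi, j, hj, hij⟩ := hA R (card_pos.mp hRpos) hR
      have hnew : j ∈ R' := by
        rw [mem_filter, pow_succ]
        exact ⟨mem_univ j, mul_apply_pos (mem_filter.mp hi).2 hij⟩
      have hlt := card_lt_card ((ssubset_iff_of_subset hsub).mpr ⟨j, hnew, hj⟩)
      have := card_lt_card (ssubset_univ_iff.mpr hR)
      rw [card_univ] at this
      omega

lemma pow_card_apply_pos (hA : CrossesEveryCut A) {v : ι} (hv : 0 < A v v) (j : ι) :
    0 < (A ^ Fintype.card ι) v j := by
  have h := min_le_card_pos_pow_apply hA hv (Fintype.card ι)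
  rw [min_eq_right (Nat.le_succ _)] at h
  have huniv := eq_univ_of_card _ (h.antisymm' (card_le_univ _))
  have hj : j ∈ ({j | 0 < (A ^ Fintype.card ι) v j} : Finset ι) := by
    rw [huniv]; exact mem_univ j
  exact (mem_filter.mp hj).2

theorem pow_two_mul_card_apply_pos (hA : CrossesEveryCut A) {v : ι} (hv : 0 < A v v)
    (i j : ι) : 0 < (A ^ (2 * Fintype.card ι)) i j := by
  have hcol : 0 < (A ^ Fintype.card ι) i v := by
    simpa [← transpose_pow] using pow_card_apply_pos hA.transpose (A := Aᵀ) hv i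
  rw [two_mul, pow_add]
  exact mul_apply_pos hcol (pow_card_apply_pos hA hv j)

end CutConnectivity

lemma twoDirWithin_of_crossesEveryCut {n m : ℕ} {M : Fin m → Matrix (Fin n) (Fin n) ℕ}
    {k : Fin m} (hk : CrossesEveryCut (M k)) {v : Fin n} (hv : 0 < M k v v) {L : ℝ}
    (hL : 2 * n ≤ L) : TwoDirWithin M L := by
  refine ⟨List.replicate (2 * n) k, ?_, by simpa using hL, fun j => Or.inl fun i => ?_⟩
  · simpa using v.pos.ne'
  · simpa [List.map_replicate, List.prod_replicate] using pow_two_mul_card_apply_pos hk hv i j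

lemma two_mul_le_mul_log {n : ℕ} (hn : 8 ≤ n) : 2 * (n : ℝ) ≤ n * log n := by
  have hexp : exp 2 < 8 := by
    have := exp_one_lt_d9
    rw [show (2 : ℝ) = 1 + 1 by norm_num, exp_add]
    nlinarith [exp_pos 1]
  have h8 : (8 : ℝ) ≤ n := by exact_mod_cast hn
  have : 2 ≤ log n := (le_log_iff_exp_le (by linarith)).mpr (by linarith)
  nlinarith

section BernoulliWeight

variable {ι : Type*} [Fintype ι] {q : ℝ}

noncomputable def bernoulliWeight (q : ℝ) (f : ι → Bool) : ℝ :=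
  ∏ i, if f i then q else 1 - q

lemma bernoulliWeight_nonneg (hq : q ∈ Set.Icc 0 1) (f : ι → Bool) : 0 ≤ bernoulliWeight q f :=
  prod_nonneg fun i _ => by split <;> linarith [hq.1, hq.2]

variable [DecidableEq ι]

lemma sum_bernoulliWeight (q : ℝ) : ∑ f : ι → Bool, bernoulliWeight q f = 1 := by
  calc ∑ f : ι → Bool, bernoulliWeight q f = ∏ _i : ι, ∑ b : Bool, if b then q else 1 - q :=
        (Fintype.prod_sum fun _ (b : Bool) => if b then q else 1 - q).symm
    _ = 1 := by simp

lemma sum_bernoulliWeight_filter_forall_false (T : Finset ι) :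
    ∑ f : ι → Bool with ∀ i ∈ T, f i = false, bernoulliWeight q f = (1 - q) ^ #T := by
  let g (i : ι) (b : Bool) : ℝ := if i ∈ T → b = false then (if b then q else 1 - q) else 0
  calc _ = ∑ f : ι → Bool, ∏ i, g i (f i) := by
        rw [sum_filter]
        exact Fintype.sum_congr _ _ fun f => by
          simp only [g, Fintype.prod_ite_zero, bernoulliWeight]
    _ = ∏ i, ∑ b, g i b := (Fintype.prod_sum g).symm
    _ = ∏ i, if i ∈ T then 1 - q else 1 :=
        Fintype.prod_congr _ _ fun i => by by_cases hi : i ∈ T <;> simp [g, hi]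
    _ = (1 - q) ^ #T := by rw [Fintype.prod_ite_mem, prod_const]

lemma sum_bernoulliWeight_le_of_forall_exists_false {κ : Type*} (hq : q ∈ Set.Icc 0 1)
    {P : (ι → Bool) → Prop} [DecidablePred P] (s : Finset κ) (T : κ → Finset ι)
    (hP : ∀ f, P f → ∃ x ∈ s, ∀ i ∈ T x, f i = false) :
    ∑ f with P f, bernoulliWeight q f ≤ ∑ x ∈ s, (1 - q) ^ #(T x) := by
  simp_rw [← sum_bernoulliWeight_filter_forall_false, sum_filter]
  rw [sum_comm]
  refine sum_le_sum fun f _ => ?_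
  have hnonneg := bernoulliWeight_nonneg hq f
  split_ifs with hf
  · obtain ⟨x, hx, hxf⟩ := hP f hf
    exact (if_pos hxf).symm.le.trans
      (single_le_sum (f := fun x => if ∀ i ∈ T x, f i = false then _ else 0)
        (fun y _ => by split_ifs <;> simp [hnonneg]) hx)
  · exact sum_nonneg fun y _ => by split_ifs <;> simp [hnonneg]

end BernoulliWeight

open Classical in
lemma bernoulliProb_eq_sum (n m : ℕ) (q : ℝ) (E : (Fin m → Matrix (Fin n) (Fin n) ℕ) → Prop) :
    bernoulliProb n m q E = ∑ f : Fin m × Fin n × Fin n → Bool with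
      E (fun k => toMat fun i j => f (k, i, j)), bernoulliWeight q f := by
  rw [sum_filter, bernoulliProb]
  refine Fintype.sum_bijective
    (fun (b : Fin m → Fin n → Fin n → Bool) (z : Fin m × Fin n × Fin n) => b z.1 z.2.1 z.2.2)
    ⟨fun b b' h => funext₃ fun k i j => congrFun h (k, i, j),
      fun f => ⟨fun k i j => f (k, i, j), rfl⟩⟩
    _ _ fun b => ?_
  simp only [bernoulliWeight, Fintype.prod_prod_type]

lemma bernoulliProb_le_one {n m : ℕ} {q : ℝ} (hq : q ∈ Set.Icc 0 1)
    (E : (Fin m → Matrix (Fin n) (Fin n) ℕ) → Prop) : bernoulliProb n m q E ≤ 1 := by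
  classical
  rw [bernoulliProb_eq_sum, ← sum_bernoulliWeight (ι := Fin m × Fin n × Fin n) q]
  exact sum_le_sum_of_subset_of_nonneg (filter_subset _ _)
    fun f _ _ => bernoulliWeight_nonneg hq f

lemma toMat_pos_iff {n : ℕ} {b : Fin n → Fin n → Bool} {i j : Fin n} : 0 < toMat b i j ↔ b i j := by
  cases h : b i j <;> simp [toMat, h]

/-- Union bound over the events that `M k` has an empty diagonal (`none`) or an empty block
`S × Sᶜ` (`some S`). -/
lemma one_sub_cut_sum_le_bernoulliProb {n m : ℕ} {q : ℝ} (hq : q ∈ Set.Icc 0 1) (k : Fin m)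
    {E : (Fin m → Matrix (Fin n) (Fin n) ℕ) → Prop}
    (hE : ∀ M : Fin m → Matrix (Fin n) (Fin n) ℕ, ∀ v, 0 < M k v v → CrossesEveryCut (M k) → E M) :
    1 - ((1 - q) ^ n + ∑ S : Finset (Fin n) with S.Nonempty ∧ S ≠ univ, (1 - q) ^ (#S * (n - #S)))
      ≤ bernoulliProb n m q E := by
  classical
  rw [bernoulliProb_eq_sum]
  set E' := fun f : Fin m × Fin n × Fin n → Bool => E (fun k => toMat fun i j => f (k, i, j))
  let T (o : Option (Finset (Fin n))) : Finset (Fin m × Fin n × Fin n) :=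
    o.elim (univ.image fun v => (k, v, v)) fun S => (S ×ˢ Sᶜ).image fun ij => (k, ij.1, ij.2)
  have hcover (f) (hf : ¬ E' f) : ∃ o ∈ insertNone {S : Finset (Fin n) | S.Nonempty ∧ S ≠ univ},
      ∀ z ∈ T o, f z = false := by
    by_contra! h
    obtain ⟨z, hz, hfz⟩ := h none none_mem_insertNone
    obtain ⟨v, -, rfl⟩ := mem_image.mp hz
    refine hf (hE _ v (toMat_pos_iff.mpr (by simpa using hfz)) fun S hS hSu => ?_)
    obtain ⟨z, hz, hfz⟩ := h (some S) (some_mem_insertNone.mpr (by simp [hS, hSu]))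
    obtain ⟨⟨i, j⟩, hij, rfl⟩ := mem_image.mp hz
    rw [mem_product] at hij
    exact ⟨i, hij.1, j, mem_compl.mp hij.2, toMat_pos_iff.mpr (by simpa using hfz)⟩
  have hbad := sum_bernoulliWeight_le_of_forall_exists_false hq _ T hcover
  have hcard : #(T none) = n := by
    simp only [T, Option.elim_none]
    rw [card_image_of_injective _ fun a b h => by simpa using congrArg (·.2.1) h,
      card_univ, Fintype.card_fin]
  have hcard' (S : Finset (Fin n)) : #(T (some S)) = #S * (n - #S) := by
    simp only [T, Option.elim_some]
    rw [card_image_of_injective _ fun a b h => by simpa [Prod.ext_iff] using h,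
      card_product, card_compl, Fintype.card_fin]
  rw [sum_insertNone, hcard] at hbad
  simp only [hcard'] at hbad
  have htotal := sum_filter_add_sum_filter_not univ E' (bernoulliWeight q)
  rw [sum_bernoulliWeight] at htotal
  linarith

/-- For `T ≤ βN / (2(1+β))` the bound `C(N,T) ≤ N^T = exp(TL)` suffices; beyond that,
`C(N,T) ≤ 2^N` is negligible against `(1-q)^{T(N-T)} ≤ exp(-qTN/2)`. -/
lemma cut_exponent_le {β L N T q : ℝ} (hβ : 0 < β) (hL : 4 * (1 + β) * log 2 ≤ β * L)
    (hq : (1 + β) * L ≤ q * N) (hT : 1 ≤ T) (hTN : 2 * T ≤ N) :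
    min (T * L) (N * log 2) - q * (T * (N - T)) ≤ -(β / 2 * L) * T := by
  have hlog2 : 0 < log 2 := log_pos one_lt_two
  have hL0 : 0 ≤ L := by nlinarith
  have hN : 0 < N := by linarith
  have hqN : (1 + β) * L * (T * (N - T)) ≤ N * (q * (T * (N - T))) := by
    nlinarith [mul_le_mul_of_nonneg_right hq (by nlinarith : 0 ≤ T * (N - T))]
  rcases le_or_gt ((1 + β) * T) (β / 2 * N) with hsmall | hlarge
  · have hB : 0 ≤ L * T * (β / 2 * N - (1 + β) * T) := mul_nonneg (by positivity) (by linarith)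
    have : (1 + β / 2) * L * T ≤ q * (T * (N - T)) :=
      le_of_mul_le_mul_left (by nlinarith) hN
    linarith [min_le_left (T * L) (N * log 2)]
  · have hC : 0 ≤ L * T * (N - T - N / 2) := mul_nonneg (by positivity) (by linarith)
    have hqT : (1 + β) * L * T / 2 ≤ q * (T * (N - T)) :=
      le_of_mul_le_mul_left (by nlinarith) hN
    have hLT : 2 * log 2 * N ≤ L * T := by
      have h1 : 0 ≤ L * (2 * (1 + β) * T - β * N) := mul_nonneg hL0 (by linarith)
      have h2 := mul_le_mul_of_nonneg_right hL hN.le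
      nlinarith
    linarith [min_le_right (T * L) (N * log 2)]

lemma choose_mul_one_sub_pow_le {n t : ℕ} {β q : ℝ} (hβ : 0 < β)
    (hL : 4 * (1 + β) * log 2 ≤ β * log n) (hq1 : q ≤ 1) (hq : (1 + β) * log n ≤ q * n)
    (ht : 1 ≤ t) (htn : 2 * t ≤ n) :
    (n.choose t : ℝ) * (1 - q) ^ (t * (n - t)) ≤ exp (-(β / 2 * log n)) ^ t := by
  have hn : (0 : ℝ) < n := by exact_mod_cast (show 0 < n by omega)
  have hchoose : (n.choose t : ℝ) ≤ exp (min (t * log n) (n * log 2)) := by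
    rw [exp_monotone.map_min, exp_nat_mul, exp_nat_mul, exp_log hn, exp_log two_pos]
    exact le_min (mod_cast n.choose_le_pow t) (mod_cast n.choose_le_two_pow t)
  have hpow : (1 - q) ^ (t * (n - t)) ≤ exp (-(q * (t * (n - t : ℝ)))) :=
    calc (1 - q) ^ (t * (n - t)) ≤ exp (-q) ^ (t * (n - t)) :=
          pow_le_pow_left₀ (by linarith) (one_sub_le_exp_neg q) _
      _ = exp (-(q * (t * (n - t : ℝ)))) := by
          rw [← exp_nat_mul]
          push_cast [Nat.cast_sub (show t ≤ n by omega)]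
          ring_nf
  calc (n.choose t : ℝ) * (1 - q) ^ (t * (n - t))
      ≤ exp (min (t * log n) (n * log 2)) * exp (-(q * (t * (n - t : ℝ)))) :=
        mul_le_mul hchoose hpow (pow_nonneg (by linarith) _) (exp_pos _).le
    _ = exp (min (t * log n) (n * log 2) - q * (t * (n - t : ℝ))) := by
        rw [← exp_add, ← sub_eq_add_neg]
    _ ≤ exp (-(β / 2 * log n) * t) :=
        exp_le_exp.mpr (cut_exponent_le hβ hL hq (by exact_mod_cast ht) (by exact_mod_cast htn))
    _ = exp (-(β / 2 * log n)) ^ t := by rw [mul_comm, exp_nat_mul]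

lemma sum_choose_mul_one_sub_pow_le {n : ℕ} {β q : ℝ} (hβ : 0 < β)
    (hL : 4 * (1 + β) * log 2 ≤ β * log n) (hq1 : q ≤ 1) (hq : (1 + β) * log n ≤ q * n) :
    ∑ s ∈ Ico 1 n, (n.choose s : ℝ) * (1 - q) ^ (s * (n - s)) ≤ 4 * exp (-(β / 2 * log n)) := by
  set r := exp (-(β / 2 * log n))
  have hr0 : 0 ≤ r := (exp_pos _).le
  have hr : r ≤ 1 / 2 := by
    rw [← exp_log (by norm_num : (0 : ℝ) < 1 / 2), one_div, log_inv]
    exact exp_le_exp.mpr (by nlinarith [log_pos one_lt_two])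
  have hterm (s) (hs : s ∈ Ico 1 n) :
      (n.choose s : ℝ) * (1 - q) ^ (s * (n - s)) ≤ r ^ s + r ^ (n - s) := by
    rw [mem_Ico] at hs
    rcases le_total (2 * s) n with h | h
    · linarith [choose_mul_one_sub_pow_le hβ hL hq1 hq hs.1 h, pow_nonneg hr0 (n - s)]
    · have := choose_mul_one_sub_pow_le (t := n - s) hβ hL hq1 hq (by omega) (by omega)
      rw [Nat.choose_symm hs.2.le, Nat.sub_sub_self hs.2.le, mul_comm (n - s)] at this
      linarith [pow_nonneg hr0 s]
  have hreflect : ∑ s ∈ Ico 1 n, r ^ (n - s) = ∑ s ∈ Ico 1 n, r ^ s := by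
    rw [sum_Ico_reflect (fun s => r ^ s) 1 (Nat.le_succ n), Nat.add_sub_cancel_left,
      Nat.add_sub_cancel]
  calc ∑ s ∈ Ico 1 n, (n.choose s : ℝ) * (1 - q) ^ (s * (n - s))
      ≤ ∑ s ∈ Ico 1 n, (r ^ s + r ^ (n - s)) := sum_le_sum hterm
    _ = 2 * ∑ s ∈ Ico 1 n, r ^ s := by rw [sum_add_distrib, hreflect, two_mul]
    _ ≤ 2 * (r ^ 1 / (1 - r)) :=
        mul_le_mul_of_nonneg_left (geom_sum_Ico_le_of_lt_one hr0 (by linarith)) two_pos.le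
    _ ≤ 4 * r := by
        rw [pow_one, mul_div_assoc', div_le_iff₀ (by linarith)]
        nlinarith

lemma sum_filter_nonempty_ne_univ_card (n : ℕ) (g : ℕ → ℝ) :
    ∑ S : Finset (Fin n) with S.Nonempty ∧ S ≠ univ, g #S = ∑ s ∈ Ico 1 n, n.choose s * g s := by
  have hP (S : Finset (Fin n)) : S.Nonempty ∧ S ≠ univ ↔ #S ∈ Ico 1 n := by
    rw [mem_Ico, Nat.one_le_iff_ne_zero, ← pos_iff_ne_zero, card_pos, ← card_lt_iff_ne_univ,
      Fintype.card_fin]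
  rw [filter_congr fun S _ => hP S, sum_filter, ← powerset_univ,
    sum_powerset_apply_card (fun s => if s ∈ Ico 1 n then g s else 0), card_univ,
    Fintype.card_fin]
  simp only [smul_ite, smul_zero, nsmul_eq_mul, sum_ite_mem]
  rw [inter_eq_right.mpr fun s hs => by simp at hs ⊢; omega]

lemma one_sub_pow_add_sum_cut_le {n : ℕ} {β q : ℝ} (hβ : 0 < β)
    (hL : 4 * (1 + β) * log 2 ≤ β * log n) (hq1 : q ≤ 1) (hq : (1 + β) * log n ≤ q * n) :
    (1 - q) ^ n + ∑ S : Finset (Fin n) with S.Nonempty ∧ S ≠ univ, (1 - q) ^ (#S * (n - #S))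
      ≤ 5 * exp (-(β / 2 * log n)) := by
  have hL0 : 0 ≤ log n := by nlinarith [log_pos one_lt_two]
  have hloop : (1 - q) ^ n ≤ exp (-(β / 2 * log n)) :=
    calc (1 - q) ^ n ≤ exp (-q) ^ n := pow_le_pow_left₀ (by linarith) (one_sub_le_exp_neg q) n
      _ = exp (-(q * n)) := by rw [← exp_nat_mul]; ring_nf
      _ ≤ exp (-(β / 2 * log n)) := exp_le_exp.mpr (by nlinarith)
  rw [sum_filter_nonempty_ne_univ_card n fun s => (1 - q) ^ (s * (n - s))]
  linarith [sum_choose_mul_one_sub_pow_le hβ hL hq1 hq]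

theorem tendsto_bernoulliProb_twoDirWithin {m : ℕ} (hm : 0 < m) {β : ℝ} (hβ : 0 < β)
    {p : ℕ → ℝ} (hp : ∀ n, p n ∈ Set.Icc 0 1)
    (hlb : ∀ᶠ n : ℕ in atTop, (1 + β) * log n / n ≤ p n) :
    Tendsto (fun n : ℕ => bernoulliProb n m (p n) fun M => TwoDirWithin M (n * log n))
      atTop (𝓝 1) := by
  have hlog : Tendsto (fun n : ℕ => log n) atTop atTop :=
    tendsto_log_atTop.comp tendsto_natCast_atTop_atTop
  have hr : Tendsto (fun n : ℕ => exp (-(β / 2 * log n))) atTop (𝓝 0) :=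
    tendsto_exp_atBot.comp (tendsto_neg_atTop_atBot.comp (hlog.const_mul_atTop (half_pos hβ)))
  refine tendsto_of_tendsto_of_tendsto_of_le_of_le' (by simpa using (hr.const_mul 5).const_sub 1)
    tendsto_const_nhds ?_ (Eventually.of_forall fun n => bernoulliProb_le_one (hp n) _)
  filter_upwards [eventually_ge_atTop 8, hlb,
    hlog.eventually_ge_atTop (4 * (1 + β) * log 2 / β)] with n hn hpn hlogn
  have hq : (1 + β) * log n ≤ p n * n := (div_le_iff₀ (by positivity)).mp hpn
  have hL : 4 * (1 + β) * log 2 ≤ β * log n := by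
    rw [div_le_iff₀ hβ] at hlogn
    linarith
  refine le_trans ?_ (one_sub_cut_sum_le_bernoulliProb (hp n) ⟨0, hm⟩ fun M v hv hcut =>
    twoDirWithin_of_crossesEveryCut hcut hv (two_mul_le_mul_log hn))
  linarith [one_sub_pow_add_sum_cut_le hβ hL (hp n).2 hq]

/-- Let `m ≥ 2`, `c ∈ ℝ`, `α > 0`, and `p n ∈ [0,1]` with `p n ≥ (1+α)·(log n + c)/n`
for all large `n`.  Then for some `C > 0` the probability that `B_m(n, p n)` admits a
2-directing word of length at most `C·n·log n` tends to `1`.  In particular the same holds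
for `m` uniformly sampled binary matrices (`p n = 1/2`). -/
theorem stmt8 (m : ℕ) (hm : 2 ≤ m) (c α : ℝ) (hα : 0 < α)
    (p : ℕ → ℝ) (hp : ∀ n, p n ∈ Set.Icc (0 : ℝ) 1)
    (hlarge : ∀ᶠ n : ℕ in atTop, (1 + α) * (Real.log n + c) / n ≤ p n) :
    (∃ C : ℝ, 0 < C ∧
      Tendsto (fun n : ℕ => bernoulliProb n m (p n)
          (fun M => TwoDirWithin M (C * n * Real.log n))) atTop (nhds 1)) ∧
    (∃ C : ℝ, 0 < C ∧
      Tendsto (fun n : ℕ => bernoulliProb n m (1 / 2)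
          (fun M => TwoDirWithin M (C * n * Real.log n))) atTop (nhds 1)) := by
  have hm₀ : 0 < m := by omega
  have hlog : Tendsto (fun n : ℕ => log n) atTop atTop :=
    tendsto_log_atTop.comp tendsto_natCast_atTop_atTop
  refine ⟨⟨1, one_pos, ?_⟩, ⟨1, one_pos, ?_⟩⟩ <;> simp only [one_mul]
  · refine tendsto_bernoulliProb_twoDirWithin hm₀ (half_pos hα) hp ?_
    filter_upwards [hlarge, (hlog.const_mul_atTop (half_pos hα)).eventually_ge_atTop
      (-(1 + α) * c)] with n hpn hlogn
    exact le_trans (div_le_div_of_nonneg_right (by linarith) (Nat.cast_nonneg n)) hpn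
  · refine tendsto_bernoulliProb_twoDirWithin hm₀ one_pos (fun _ => by norm_num) ?_
    filter_upwards [(isLittleO_log_id_atTop.comp_tendsto tendsto_natCast_atTop_atTop).bound
      (by norm_num : (0 : ℝ) < 1 / 4), eventually_gt_atTop 0] with n hbound hn
    have hn' : (0 : ℝ) < n := by exact_mod_cast hn
    simp only [Function.comp_apply, id, norm_eq_abs, abs_of_pos hn'] at hbound
    rw [div_le_iff₀ hn']
    linarith [le_abs_self (log n)]
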